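/- Let f : E → [0,∞] be strictly upper radial and let x, y ∈ E satisfy (x, f(x)) = Γ(y, f^Γ(y)) with both points in E × ℝ₊₊, and fix an integer k ≥ 1. Then f is finite and k times continuously differentiable on a neighborhood of x with ⟨∇f(x), x⟩ − f(x) < 0 if and only if f^Γ (which then equals f_Γ) is finite and k times continuously differentiable on a neighborhood of y with ⟨∇f^Γ(y), y⟩ − f^Γ(y) < 0, in which case ∇f^Γ(y) = ∇f(x) / (⟨∇f(x), x⟩ − f(x)). -/

import Mathlib

open Set
open scoped ENNReal RealInnerProductSpace

noncomputable section

variable {E : Type*} [NormedAddCommGroup E] [InnerProductSpace ℝ E] [FiniteDimensional ℝ E]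

/-- The perspective function `f^p(y,v) = v·f(y/v)` (for `v > 0`). -/
def persp (f : E → ℝ≥0∞) (y : E) (v : ℝ) : ℝ≥0∞ := ENNReal.ofReal v * f (v⁻¹ • y)

/-- The upper radial transformation `f^Γ(y) = sup{v > 0 : v·f(y/v) ≤ 1}` (`sup ∅ = 0`). -/
def radSup (f : E → ℝ≥0∞) (y : E) : ℝ≥0∞ :=
  ⨆ (v : ℝ) (_ : 0 < v) (_ : persp f y v ≤ 1), ENNReal.ofReal v

/-- The lower radial transformation `f_Γ(y) = inf{v > 0 : v·f(y/v) ≥ 1}` (`inf ∅ = ∞`). -/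
def radInf (f : E → ℝ≥0∞) (y : E) : ℝ≥0∞ :=
  ⨅ (v : ℝ) (_ : 0 < v) (_ : 1 ≤ persp f y v), ENNReal.ofReal v

/-- `f` is strictly upper radial: every `f^p(y,·)` is nondecreasing and upper
semicontinuous on `ℝ₊₊`, and strictly increasing on `{v > 0 : 0 < f^p(y,v) < ∞}`. -/
def StrictUpperRadial (f : E → ℝ≥0∞) : Prop :=
  ∀ y : E, MonotoneOn (persp f y) (Ioi (0 : ℝ)) ∧
    UpperSemicontinuousOn (persp f y) (Ioi (0 : ℝ)) ∧
    StrictMonoOn (persp f y) {v : ℝ | 0 < v ∧ 0 < persp f y v ∧ persp f y v ≠ ⊤}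

/-- `g : E → ℝ≥0∞` is finite and `k` times continuously differentiable on a neighborhood
of `x`, with `⟨∇g(x), x⟩ − g(x) < 0`. -/
def SmoothlyRadialAt (g : E → ℝ≥0∞) (k : ℕ) (x : E) : Prop :=
  (∃ U ∈ nhds x, (∀ z ∈ U, g z ≠ ⊤) ∧ ContDiffOn ℝ k (fun z => (g z).toReal) U) ∧
    ⟪gradient (fun z => (g z).toReal) x, x⟫ - (g x).toReal < 0

open Filter Topology Metric

/-!
Along each ray the perspective `v ↦ v·f(w/v)` is nondecreasing, and strictly increasing where it
is finite and positive, so `f^Γ(w)` is the unique `v > 0` with `v·f(w/v) = 1`; with `s = 1/v`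
this reads `f(s•w) = s`. Both directions therefore solve an equation `h(s•w) = s` for `s` as a
function of `w` by the implicit function theorem: at a solution `q = s•w`, the partial derivative
`⟨∇h(q), w⟩ - 1 = (⟨∇h(q), q⟩ - h(q)) / s` is negative by the sign condition.

* For the forward direction take `h = f`; the solution `σ` near `y` gives `f^Γ = 1/σ` near `y`.
* For the converse take `h = f^Γ`, with solution `τ` near `x`. For `w` near `x`, the map
  `s ↦ f^Γ(s•w) - s` is strictly decreasing near `τ(w)`, nonnegative where `s·f(w) ≤ 1` and
  nonpositive where `s·f(w) ≥ 1`, which forces `f(w) = 1/τ(w)`.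

Differentiating `1/σ` then gives the gradient formula and the sign condition.
-/

theorem ENNReal.eq_ofReal_inv_of_eventually {c : ℝ≥0∞} {t : ℝ} (ht : 0 < t)
    (hlt : ∀ᶠ v in 𝓝[<] t, ENNReal.ofReal v * c < 1)
    (hgt : ∀ᶠ v in 𝓝[>] t, 1 < ENNReal.ofReal v * c) : c = ENNReal.ofReal t⁻¹ := by
  obtain ⟨v, hv, hv0⟩ := (hlt.and (nhdsWithin_le_nhds (lt_mem_nhds ht))).exists
  have hc : c ≠ ⊤ := by
    rintro rfl
    simp [ENNReal.mul_top (ENNReal.ofReal_pos.mpr hv0).ne'] at hv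
  lift c to NNReal using hc
  have hmul : ∀ v, ENNReal.ofReal v * c = ENNReal.ofReal (v * c) := fun v => by
    rw [ENNReal.ofReal_mul' c.coe_nonneg, ENNReal.ofReal_coe_nnreal]
  simp only [hmul, ENNReal.ofReal_lt_one, ENNReal.one_lt_ofReal] at hlt hgt
  have hlim : Tendsto (fun v : ℝ => v * c) (𝓝 t) (𝓝 (t * c)) :=
    (continuous_id.mul continuous_const).tendsto t
  have hle : t * c ≤ 1 :=
    le_of_tendsto (hlim.mono_left nhdsWithin_le_nhds) (hlt.mono fun _ => le_of_lt)
  have hge : 1 ≤ t * c :=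
    ge_of_tendsto (hlim.mono_left nhdsWithin_le_nhds) (hgt.mono fun _ => le_of_lt)
  rw [← ENNReal.ofReal_coe_nnreal, eq_inv_of_mul_eq_one_right (le_antisymm hle hge)]

section Radial

variable {V : Type*} [NormedAddCommGroup V] [InnerProductSpace ℝ V] {f : V → ℝ≥0∞} {w : V}
  {v v' : ℝ}

lemma persp_smul_self (f : V → ℝ≥0∞) (w : V) (hv : v ≠ 0) :
    persp f (v • w) v = ENNReal.ofReal v * f w := by
  rw [persp, smul_smul, inv_mul_cancel₀ hv, one_smul]

lemma ofReal_le_radSup (hv : 0 < v) (h : persp f w v ≤ 1) : ENNReal.ofReal v ≤ radSup f w :=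
  le_iSup_of_le v <| le_iSup_of_le hv <| le_iSup_of_le h le_rfl

lemma radInf_le_ofReal (hv : 0 < v) (h : 1 ≤ persp f w v) : radInf f w ≤ ENNReal.ofReal v :=
  iInf_le_of_le v <| iInf_le_of_le hv <| iInf_le_of_le h le_rfl

lemma radInf_le_radSup (f : V → ℝ≥0∞) (w : V) : radInf f w ≤ radSup f w := by
  refine ENNReal.le_of_forall_nnreal_lt fun r hr => ?_
  rcases eq_or_ne r 0 with rfl | hr0
  · simp
  have hr_pos : (0 : ℝ) < r := by positivity
  rw [← ENNReal.ofReal_coe_nnreal] at hr ⊢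
  by_cases h : persp f w r ≤ 1
  · exact ofReal_le_radSup hr_pos h
  · exact absurd (radInf_le_ofReal hr_pos (not_le.mp h).le) hr.not_ge

namespace StrictUpperRadial

lemma le_of_persp_le_one_of_one_le_persp (hrad : StrictUpperRadial f) (hv : 0 < v) (hv' : 0 < v')
    (h : persp f w v ≤ 1) (h' : 1 ≤ persp f w v') : v ≤ v' := by
  obtain ⟨hmono, -, hsmono⟩ := hrad w
  by_contra! hlt
  have hle := hmono hv' hv hlt.le
  have h₁ : persp f w v' = 1 := le_antisymm (hle.trans h) h'
  have h₂ : persp f w v = 1 := le_antisymm h (h₁ ▸ hle)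
  exact (hsmono ⟨hv', by simp [h₁], by simp [h₁]⟩ ⟨hv, by simp [h₂], by simp [h₂]⟩ hlt).ne
    (h₁.trans h₂.symm)

lemma radSup_le_ofReal (hrad : StrictUpperRadial f) (hv : 0 < v) (h : 1 ≤ persp f w v) :
    radSup f w ≤ ENNReal.ofReal v :=
  iSup_le fun _ => iSup₂_le fun hv' h' =>
    ENNReal.ofReal_le_ofReal (hrad.le_of_persp_le_one_of_one_le_persp hv' hv h' h)

lemma radSup_eq_radInf (hrad : StrictUpperRadial f) : radSup f = radInf f :=
  funext fun w => le_antisymm (le_iInf fun _ => le_iInf₂ fun hv h => hrad.radSup_le_ofReal hv h)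
    (radInf_le_radSup f w)

lemma radSup_eq_ofReal_inv (hrad : StrictUpperRadial f) {s : ℝ} (hs : 0 < s)
    (h : f (s • w) = ENNReal.ofReal s) : radSup f w = ENNReal.ofReal s⁻¹ := by
  have hp : persp f w s⁻¹ = 1 := by
    rw [persp, inv_inv, h, ← ENNReal.ofReal_mul (inv_nonneg.mpr hs.le), inv_mul_cancel₀ hs.ne',
      ENNReal.ofReal_one]
  exact le_antisymm (hrad.radSup_le_ofReal (inv_pos.mpr hs) hp.ge)
    (ofReal_le_radSup (inv_pos.mpr hs) hp.le)

theorem apply_eq_ofReal_inv (hrad : StrictUpperRadial f) {t : ℝ} {S : Set ℝ}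
    (ht : 0 < t) (hS : S ∈ 𝓝 t) (hfin : ∀ s ∈ S, radSup f (s • w) ≠ ⊤)
    (hanti : StrictAntiOn (fun s => (radSup f (s • w)).toReal - s) S)
    (hfix : (radSup f (t • w)).toReal = t) : f w = ENNReal.ofReal t⁻¹ := by
  have htS := mem_of_mem_nhds hS
  have hpos : ∀ᶠ v in 𝓝 t, 0 < v := lt_mem_nhds ht
  refine ENNReal.eq_ofReal_inv_of_eventually ht ?_ ?_
  · filter_upwards [nhdsWithin_le_nhds hS, nhdsWithin_le_nhds hpos, self_mem_nhdsWithin]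
      with v hvS hv hvt
    by_contra! h
    have hle := hrad.radSup_le_ofReal hv (by rwa [persp_smul_self f w hv.ne'])
    have hlt := hanti hvS htS hvt
    simp only [hfix, sub_self] at hlt
    linarith [ENNReal.toReal_le_of_le_ofReal hv.le hle]
  · filter_upwards [nhdsWithin_le_nhds hS, nhdsWithin_le_nhds hpos, self_mem_nhdsWithin]
      with v hvS hv hvt
    by_contra! h
    have hle := ofReal_le_radSup hv (by rwa [persp_smul_self f w hv.ne'])
    have hlt := hanti htS hvS hvt
    simp only [hfix, sub_self] at hlt
    linarith [(ENNReal.ofReal_le_iff_le_toReal (hfin v hvS)).mp hle]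

end StrictUpperRadial

end Radial

section Calculus

variable {V : Type*} [NormedAddCommGroup V] [NormedSpace ℝ V]

theorem Filter.Eventually.exists_eventually_forall_mem_ball {X Y : Type*} [TopologicalSpace X]
    [PseudoMetricSpace Y] {P : X → Y → Prop} {a : X} {b : Y}
    (h : ∀ᶠ p in 𝓝 (a, b), P p.1 p.2) : ∃ ε > 0, ∀ᶠ x in 𝓝 a, ∀ s ∈ ball b ε, P x s := by
  rw [nhds_prod_eq] at h
  obtain ⟨pa, ha, pb, hb, hab⟩ := eventually_prod_iff.mp h
  obtain ⟨ε, hε, hball⟩ := eventually_nhds_iff_ball.mp hb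
  exact ⟨ε, hε, ha.mono fun x hx s hs => hab hx (hball s hs)⟩

lemma ContinuousLinearMap.isInvertible_of_apply_one_ne_zero {L : ℝ →L[ℝ] ℝ} (h : L 1 ≠ 0) :
    L.IsInvertible ∧ ∀ z, L.inverse z = z / L 1 := by
  have hL : (ContinuousLinearEquiv.unitsEquivAut ℝ (Units.mk0 _ h) : ℝ →L[ℝ] ℝ) = L := by
    ext; simp [ContinuousLinearEquiv.unitsEquivAut_apply]
  refine ⟨⟨_, hL⟩, fun z => ?_⟩
  rw [← hL, ContinuousLinearMap.inverse_equiv]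
  simp [div_eq_mul_inv]

theorem ContDiffAt.exists_implicitFunction_real [CompleteSpace V] {F : V × ℝ → ℝ} {p : V × ℝ}
    {k : ℕ} (hF : ContDiffAt ℝ k F p) (hk : k ≠ 0) (hb : fderiv ℝ F p (0, 1) ≠ 0) :
    ∃ φ : V → ℝ, ContDiffAt ℝ k φ p.1 ∧ φ p.1 = p.2 ∧ (∀ᶠ z in 𝓝 p.1, F (z, φ z) = F p) ∧
      ∀ w, fderiv ℝ φ p.1 w = -fderiv ℝ F p (w, 0) / fderiv ℝ F p (0, 1) := by
  have hk' : (k : WithTop ℕ∞) ≠ 0 := by exact_mod_cast hk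
  obtain ⟨hinv, hinv_apply⟩ :=
    (fderiv ℝ F p ∘L .inr ℝ V ℝ).isInvertible_of_apply_one_ne_zero hb
  refine ⟨hF.implicitFunction hk' hinv, hF.contDiffAt_implicitFunction hk' hinv,
    hF.implicitFunction_apply_self hk' hinv, hF.eventually_apply_implicitFunction hk' hinv,
    fun w => ?_⟩
  rw [(hF.hasStrictFDerivAt_implicitFunction hk' hinv).hasFDerivAt.fderiv]
  simp [hinv_apply, neg_div]

theorem ContDiffAt.exists_eventually_apply_smul_eq [CompleteSpace V] {h : V → ℝ} {w₀ : V}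
    {s₀ : ℝ} {k : ℕ} (hh : ContDiffAt ℝ k h (s₀ • w₀)) (hk : k ≠ 0) (hfix : h (s₀ • w₀) = s₀)
    (hD : fderiv ℝ h (s₀ • w₀) w₀ ≠ 1) :
    ∃ σ : V → ℝ, ContDiffAt ℝ k σ w₀ ∧ σ w₀ = s₀ ∧ (∀ᶠ w in 𝓝 w₀, h (σ w • w) = σ w) ∧
      fderiv ℝ σ w₀ = (1 - fderiv ℝ h (s₀ • w₀) w₀)⁻¹ • s₀ • fderiv ℝ h (s₀ • w₀) := by
  set D := fderiv ℝ h (s₀ • w₀)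
  have hk' : (k : WithTop ℕ∞) ≠ 0 := by exact_mod_cast hk
  have hsmul : HasFDerivAt (fun p : V × ℝ => p.2 • p.1)
      (s₀ • ContinuousLinearMap.fst ℝ V ℝ + (ContinuousLinearMap.snd ℝ V ℝ).smulRight w₀)
      (w₀, s₀) := by
    have hs : HasFDerivAt (fun p : V × ℝ => p.2) (ContinuousLinearMap.snd ℝ V ℝ) (w₀, s₀) :=
      hasFDerivAt_snd
    exact hs.smul hasFDerivAt_fst
  have hG : HasFDerivAt (fun p : V × ℝ => h (p.2 • p.1) - p.2)
      (D ∘L (s₀ • ContinuousLinearMap.fst ℝ V ℝ + (ContinuousLinearMap.snd ℝ V ℝ).smulRight w₀)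
        - ContinuousLinearMap.snd ℝ V ℝ) (w₀, s₀) :=
    ((hh.differentiableAt hk').hasFDerivAt.comp (f := fun p : V × ℝ => p.2 • p.1) _ hsmul).sub
      hasFDerivAt_snd
  have hGk : ContDiffAt ℝ k (fun p : V × ℝ => h (p.2 • p.1) - p.2) (w₀, s₀) :=
    (hh.comp (f := fun p : V × ℝ => p.2 • p.1) _ (contDiffAt_snd.smul contDiffAt_fst)).sub
      contDiffAt_snd
  have hG₁ : fderiv ℝ (fun p : V × ℝ => h (p.2 • p.1) - p.2) (w₀, s₀) (0, 1) = D w₀ - 1 := by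
    simp [hG.fderiv]
  have hG₂ : ∀ w, fderiv ℝ (fun p : V × ℝ => h (p.2 • p.1) - p.2) (w₀, s₀) (w, 0) = s₀ * D w := by
    simp [hG.fderiv]
  obtain ⟨σ, hσ, hσw₀, hσfix, hσ'⟩ :=
    hGk.exists_implicitFunction_real hk (by rw [hG₁]; exact sub_ne_zero.mpr hD)
  refine ⟨σ, hσ, hσw₀, ?_, ?_⟩
  · filter_upwards [hσfix] with w hw
    simpa [hfix, sub_eq_zero] using hw
  · ext w
    have h₁ : D w₀ - 1 ≠ 0 := sub_ne_zero.mpr hD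
    have h₂ : 1 - D w₀ ≠ 0 := sub_ne_zero.mpr (Ne.symm hD)
    rw [hσ', hG₁, hG₂, smul_apply, smul_apply, smul_eq_mul, smul_eq_mul]
    field_simp
    ring

theorem ContDiffAt.exists_strictAntiOn_apply_smul_sub {h : V → ℝ} {w₀ : V} {s₀ : ℝ} {k : ℕ}
    (hh : ContDiffAt ℝ k h (s₀ • w₀)) (hk : k ≠ 0) (hD : fderiv ℝ h (s₀ • w₀) w₀ < 1) :
    ∃ ε > 0, ∀ᶠ w in 𝓝 w₀, StrictAntiOn (fun s => h (s • w) - s) (ball s₀ ε) := by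
  have hk' : (k : WithTop ℕ∞) ≠ 0 := by exact_mod_cast hk
  have hsmul : ContinuousAt (fun p : V × ℝ => p.2 • p.1) (w₀, s₀) :=
    continuous_snd.smul continuous_fst |>.continuousAt
  have hdiff : ∀ᶠ p : V × ℝ in 𝓝 (w₀, s₀), DifferentiableAt ℝ h (p.2 • p.1) :=
    hsmul.eventually ((hh.eventually (by simp)).mono fun q hq => hq.differentiableAt hk')
  have hneg : ∀ᶠ p : V × ℝ in 𝓝 (w₀, s₀), fderiv ℝ h (p.2 • p.1) p.1 < 1 :=
    ((hh.continuousAt_fderiv hk').comp (f := fun p : V × ℝ => p.2 • p.1) hsmul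
      |>.clm_apply continuousAt_fst).eventually_lt continuousAt_const hD
  obtain ⟨ε, hε, hball⟩ := Filter.Eventually.exists_eventually_forall_mem_ball
    (P := fun w s => DifferentiableAt ℝ h (s • w) ∧ fderiv ℝ h (s • w) w < 1) (hdiff.and hneg)
  refine ⟨ε, hε, hball.mono fun w hw => ?_⟩
  have hderiv : ∀ s ∈ ball s₀ ε,
      HasDerivAt (fun s => h (s • w) - s) (fderiv ℝ h (s • w) w - 1) s := fun s hs => by
    have hcomp := (hw s hs).1.hasFDerivAt.comp_hasDerivAt s ((hasDerivAt_id s).smul_const w)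
    rw [one_smul] at hcomp
    exact hcomp.sub (hasDerivAt_id s)
  refine strictAntiOn_of_hasDerivWithinAt_neg (f' := fun s => fderiv ℝ h (s • w) w - 1)
    (convex_ball _ _) (fun s hs => (hderiv s hs).continuousAt.continuousWithinAt) ?_ ?_ <;>
    rw [isOpen_ball.interior_eq] <;> intro s hs
  · exact (hderiv s hs).hasDerivWithinAt
  · linarith [(hw s hs).2]

end Calculus

section SmoothlyRadialAt

variable {g : E → ℝ≥0∞} {k : ℕ}

lemma smoothlyRadialAt_iff {x : E} : SmoothlyRadialAt g k x ↔
    ((∀ᶠ z in 𝓝 x, g z ≠ ⊤) ∧ ContDiffAt ℝ k (fun z => (g z).toReal) x) ∧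
      fderiv ℝ (fun z => (g z).toReal) x x - (g x).toReal < 0 := by
  rw [SmoothlyRadialAt, inner_gradient_left]
  refine and_congr_left' ⟨fun ⟨U, hU, hfin, hcd⟩ => ⟨eventually_of_mem hU hfin, hcd.contDiffAt hU⟩,
    fun ⟨hfin, hcd⟩ => ⟨_, hfin.and (hcd.eventually (by simp)), fun _ hz => hz.1,
      fun _ hz => hz.2.contDiffWithinAt⟩⟩

theorem smoothlyRadialAt_of_eventuallyEq_ofReal_inv {σ : E → ℝ} {D : E →L[ℝ] ℝ} {w₀ : E}
    {s₀ : ℝ} (hσ : ContDiffAt ℝ k σ w₀) (hk : k ≠ 0) (hs₀ : 0 < s₀) (hσw₀ : σ w₀ = s₀)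
    (hσ' : fderiv ℝ σ w₀ = (1 - D w₀)⁻¹ • s₀ • D) (hD : D w₀ < 1)
    (hg : ∀ᶠ w in 𝓝 w₀, g w = ENNReal.ofReal (σ w)⁻¹) :
    SmoothlyRadialAt g k w₀ ∧
      gradient (fun w => (g w).toReal) w₀ =
        (s₀ * (D w₀ - 1))⁻¹ • (InnerProductSpace.toDual ℝ E).symm D := by
  have hpos : ∀ᶠ w in 𝓝 w₀, 0 < σ w := hσ.continuousAt.eventually (lt_mem_nhds (hσw₀ ▸ hs₀))
  have heq : (fun w => (g w).toReal) =ᶠ[𝓝 w₀] fun w => (σ w)⁻¹ := by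
    filter_upwards [hg, hpos] with w hw hw0
    rw [hw, ENNReal.toReal_ofReal (inv_nonneg.mpr hw0.le)]
  have hσ₀ : σ w₀ ≠ 0 := hσw₀ ▸ hs₀.ne'
  have hD₁ : D w₀ - 1 < 0 := by linarith
  have hD₂ : 0 < 1 - D w₀ := by linarith
  have hderiv : fderiv ℝ (fun w => (g w).toReal) w₀ = (s₀ * (D w₀ - 1))⁻¹ • D := by
    have hinv : HasFDerivAt (fun w => (σ w)⁻¹) (-(σ w₀ ^ 2)⁻¹ • fderiv ℝ σ w₀) w₀ :=
      (hasDerivAt_inv hσ₀).comp_hasFDerivAt w₀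
        (hσ.differentiableAt (by exact_mod_cast hk)).hasFDerivAt
    rw [heq.fderiv_eq, hinv.fderiv, hσ', hσw₀]
    ext z
    simp only [neg_smul, neg_apply, smul_apply, smul_eq_mul, mul_inv_rev]
    field_simp [hD₁.ne, hD₂.ne']
    ring
  refine ⟨smoothlyRadialAt_iff.mpr ⟨⟨hg.mono fun w hw => hw ▸ ENNReal.ofReal_ne_top,
    (hσ.inv hσ₀).congr_of_eventuallyEq heq⟩, ?_⟩, ?_⟩
  · rw [hderiv, heq.eq_of_nhds, hσw₀, smul_apply, smul_eq_mul]
    have hneg : s₀ * (D w₀ - 1) < 0 := mul_neg_of_pos_of_neg hs₀ hD₁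
    calc (s₀ * (D w₀ - 1))⁻¹ * D w₀ - s₀⁻¹ = (s₀ * (D w₀ - 1))⁻¹ := by
          field_simp [hD₁.ne]
          ring
      _ < 0 := inv_lt_zero.mpr hneg
  · rw [gradient, hderiv, map_smul]

end SmoothlyRadialAt

namespace StrictUpperRadial

variable {f : E → ℝ≥0∞} {x y : E} {k : ℕ} {u : ℝ}

theorem smoothlyRadialAt_radSup (hrad : StrictUpperRadial f) (hk : k ≠ 0) (hu : 0 < u)
    (hx : x = u⁻¹ • y) (hfx : (f x).toReal = u⁻¹) (hf : SmoothlyRadialAt f k x) :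
    SmoothlyRadialAt (radSup f) k y ∧
      gradient (fun z => (radSup f z).toReal) y =
        (⟪gradient (fun z => (f z).toReal) x, x⟫ - (f x).toReal)⁻¹ •
          gradient (fun z => (f z).toReal) x := by
  obtain ⟨⟨hfin, hcd⟩, hneg⟩ := smoothlyRadialAt_iff.mp hf
  set D := fderiv ℝ (fun z => (f z).toReal) x
  have hDy : D y = u * D x := by rw [hx, map_smul, smul_eq_mul, mul_inv_cancel_left₀ hu.ne']
  have hDy₁ : D y < 1 := by
    rw [hfx] at hneg
    have hmul := mul_neg_of_pos_of_neg hu hneg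
    rw [mul_sub, mul_inv_cancel₀ hu.ne', ← hDy] at hmul
    linarith
  obtain ⟨σ, hσ, hσy, hfix, hσ'⟩ := ContDiffAt.exists_eventually_apply_smul_eq
    (h := fun z => (f z).toReal) (w₀ := y) (s₀ := u⁻¹) (hx ▸ hcd) hk (hx ▸ hfx) (hx ▸ hDy₁.ne)
  rw [← hx] at hσ'
  change fderiv ℝ σ y = (1 - D y)⁻¹ • u⁻¹ • D at hσ'
  have hpos : ∀ᶠ z in 𝓝 y, 0 < σ z :=
    hσ.continuousAt.eventually (lt_mem_nhds (by rw [hσy]; positivity))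
  have hfin' : ∀ᶠ z in 𝓝 y, f (σ z • z) ≠ ⊤ := by
    have hcont : ContinuousAt (fun z => σ z • z) y := hσ.continuousAt.smul continuousAt_id
    rw [ContinuousAt, hσy, ← hx] at hcont
    exact hcont.eventually hfin
  have hg : ∀ᶠ z in 𝓝 y, radSup f z = ENNReal.ofReal (σ z)⁻¹ := by
    filter_upwards [hpos, hfin', hfix] with z hz hzfin hzfix
    exact hrad.radSup_eq_ofReal_inv hz
      ((ENNReal.ofReal_toReal hzfin).symm.trans (congrArg ENNReal.ofReal hzfix))
  obtain ⟨hsm, hgrad⟩ :=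
    smoothlyRadialAt_of_eventuallyEq_ofReal_inv hσ hk (inv_pos.mpr hu) hσy hσ' hDy₁ hg
  refine ⟨hsm, hgrad.trans ?_⟩
  have hinner : ⟪gradient (fun z => (f z).toReal) x, x⟫ = D x := inner_gradient_left
  rw [hinner, hfx, hDy]
  congr 1
  field_simp

theorem smoothlyRadialAt_of_radSup (hrad : StrictUpperRadial f) (hk : k ≠ 0) (hu : 0 < u)
    (hx : x = u⁻¹ • y) (hgy : (radSup f y).toReal = u) (hg : SmoothlyRadialAt (radSup f) k y) :
    SmoothlyRadialAt f k x := by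
  have hy : y = u • x := by rw [hx, smul_inv_smul₀ hu.ne']
  subst hy
  obtain ⟨⟨hfin, hcd⟩, hneg⟩ := smoothlyRadialAt_iff.mp hg
  set D := fderiv ℝ (fun z => (radSup f z).toReal) (u • x)
  have hDx : D x < 1 := by
    rw [hgy, map_smul, smul_eq_mul] at hneg
    nlinarith
  obtain ⟨τ, hτ, hτx, hfix, hτ'⟩ := hcd.exists_eventually_apply_smul_eq hk hgy hDx.ne
  obtain ⟨ε, hε, hanti⟩ := hcd.exists_strictAntiOn_apply_smul_sub hk hDx
  have hsmul : ContinuousAt (fun p : E × ℝ => p.2 • p.1) (x, u) :=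
    (continuous_snd.smul continuous_fst).continuousAt
  obtain ⟨ε', hε', hfin'⟩ := Filter.Eventually.exists_eventually_forall_mem_ball
    (P := fun w s => radSup f (s • w) ≠ ⊤) (hsmul.eventually hfin)
  have hτball : ∀ᶠ w in 𝓝 x, τ w ∈ ball u (min ε ε') :=
    hτ.continuousAt.eventually (by rw [hτx]; exact ball_mem_nhds _ (lt_min hε hε'))
  have hpos : ∀ᶠ w in 𝓝 x, 0 < τ w := hτ.continuousAt.eventually (lt_mem_nhds (hτx ▸ hu))
  have hf : ∀ᶠ w in 𝓝 x, f w = ENNReal.ofReal (τ w)⁻¹ := by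
    filter_upwards [hanti, hfin', hfix, hτball, hpos] with w hwanti hwfin hwfix hwτ hw0
    exact hrad.apply_eq_ofReal_inv hw0 (isOpen_ball.mem_nhds hwτ)
      (fun s hs => hwfin s (ball_subset_ball (min_le_right _ _) hs))
      (hwanti.mono (ball_subset_ball (min_le_left _ _))) hwfix
  exact (smoothlyRadialAt_of_eventuallyEq_ofReal_inv hτ hk hu hτx hτ' hDx hf).1

end StrictUpperRadial

theorem radial_differentiability_general (f : E → ℝ≥0∞) (hrad : StrictUpperRadial f)
    (x y : E) (k : ℕ) (hk : 1 ≤ k)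
    (hfy : radSup f y ≠ 0 ∧ radSup f y ≠ ⊤)
    (hxy : x = ((radSup f y).toReal)⁻¹ • y ∧ (f x).toReal = ((radSup f y).toReal)⁻¹) :
    radSup f = radInf f ∧
    (SmoothlyRadialAt f k x ↔ SmoothlyRadialAt (radSup f) k y) ∧
    (SmoothlyRadialAt f k x →
      gradient (fun z => ((radSup f) z).toReal) y =
        (⟪gradient (fun z => (f z).toReal) x, x⟫ - (f x).toReal)⁻¹ •
          gradient (fun z => (f z).toReal) x) := by
  have hk₀ : k ≠ 0 := by omega
  have hu : 0 < (radSup f y).toReal := ENNReal.toReal_pos hfy.1 hfy.2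
  have forward := hrad.smoothlyRadialAt_radSup hk₀ hu hxy.1 hxy.2
  exact ⟨hrad.radSup_eq_radInf,
    ⟨fun h => (forward h).1, hrad.smoothlyRadialAt_of_radSup hk₀ hu hxy.1 rfl⟩,
    fun h => (forward h).2⟩

/-- For strictly upper radial `f` and `(x, f(x)) = Γ(y, f^Γ(y))` in `E × ℝ₊₊`: `f` is
finite and `k` times continuously differentiable near `x` with `⟨∇f(x),x⟩ − f(x) < 0`
iff `f^Γ` (which equals `f_Γ`) is so near `y` with `⟨∇f^Γ(y),y⟩ − f^Γ(y) < 0`, and then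
`∇f^Γ(y) = ∇f(x) / (⟨∇f(x),x⟩ − f(x))`. -/
theorem radial_differentiability (f : E → ℝ≥0∞) (hrad : StrictUpperRadial f)
    (x y : E) (k : ℕ) (hk : 1 ≤ k)
    (hfx : f x ≠ 0 ∧ f x ≠ ⊤) (hfy : radSup f y ≠ 0 ∧ radSup f y ≠ ⊤)
    (hxy : x = ((radSup f y).toReal)⁻¹ • y ∧ (f x).toReal = ((radSup f y).toReal)⁻¹) :
    radSup f = radInf f ∧
    (SmoothlyRadialAt f k x ↔ SmoothlyRadialAt (radSup f) k y) ∧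
    (SmoothlyRadialAt f k x →
      gradient (fun z => ((radSup f) z).toReal) y =
        (⟪gradient (fun z => (f z).toReal) x, x⟫ - (f x).toReal)⁻¹ •
          gradient (fun z => (f z).toReal) x) :=
  radial_differentiability_general f hrad x y k hk hfy hxy
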